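/- Let m ≥ 3 be an odd integer and H_0 := Σ_{1≤u<v≤m} z_{uv}·P_u·P_v ∈ R = 𝔽₂[z_e : e ∈ E]. Then for every i ∈ {1,…,m}, the identity Σ_{j=1}^m D_j(P_i)·P_j² = P_i·H_0 holds in R. (This is the commutativity of the left square of the chain map from the Frobenius twist of the Pfaffian resolution to the Pfaffian resolution.) -/

import Mathlib

open scoped Classical

noncomputable section

/-- The edges of the complete graph `K_m`: 2-element subsets of `Fin m`. -/
abbrev Edge (m : ℕ) := {e : Sym2 (Fin m) // ¬ e.IsDiag}

/-- The polynomial ring `𝔽₂[z_e : e ∈ E]`. -/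
abbrev R2 (m : ℕ) := MvPolynomial (Edge m) (ZMod 2)

/-- The variable `z_{ij}`, with the convention `z_{ii} = 0`. -/
def Zv (m : ℕ) (i j : Fin m) : R2 m :=
  if h : i = j then 0
  else MvPolynomial.X ⟨s(i, j), by simp only [Sym2.mk_isDiag_iff]; exact h⟩

/-- `M` is a perfect matching of the vertex set `T`. -/
def IsPM (m : ℕ) (T : Finset (Fin m)) (M : Finset (Edge m)) : Prop :=
  (∀ v : Fin m, v ∈ T ↔ ∃ e ∈ M, v ∈ e.val) ∧
  (∀ e ∈ M, ∀ f ∈ M, ∀ v : Fin m, v ∈ e.val → v ∈ f.val → e = f)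

/-- The sum, over all perfect matchings `M` of `T`, of the monomial `∏_{e ∈ M} z_e`. -/
def matchSum (m : ℕ) (T : Finset (Fin m)) : R2 m :=
  ∑ M ∈ Finset.univ.filter (IsPM m T), ∏ e ∈ M, MvPolynomial.X e

/-- The (characteristic 2) Pfaffian `P_i`. -/
def P (m : ℕ) (i : Fin m) : R2 m := matchSum m (Finset.univ.erase i)

/-- `H₀ = Σ_{i<j} z_{ij} P_i P_j`. -/
def H0 (m : ℕ) : R2 m :=
  ∑ p ∈ Finset.univ.filter (fun p : Fin m × Fin m => p.1 < p.2),
    Zv m p.1 p.2 * P m p.1 * P m p.2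

theorem Zv_symm (m : ℕ) (i j : Fin m) : Zv m i j = Zv m j i := by
  unfold Zv
  rcases eq_or_ne i j with h | h
  · subst h; rfl
  · rw [dif_neg h, dif_neg (Ne.symm h)]
    congr 1
    exact Subtype.ext (Sym2.eq_swap)

/-- The differential operator `D_k = Σ_{{u,v} ∈ E, k ∉ {u,v}} z_{uk} z_{kv} ∂/∂z_{uv}`. -/
def D (m : ℕ) (k : Fin m) (f : R2 m) : R2 m :=
  ∑ e ∈ Finset.univ.filter (fun e : Edge m => k ∉ e.val),
    Sym2.lift ⟨fun u v => Zv m u k * Zv m k v,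
      fun u v => by simp only []; rw [Zv_symm m u k, Zv_symm m k v, mul_comm]⟩ e.val *
    MvPolynomial.pderiv e f

/-- `C` is the edge set of a cycle of length `n` in `K_m`. -/
def IsCycleEdges (m n : ℕ) (C : Finset (Edge m)) : Prop :=
  3 ≤ n ∧ ∃ f : ℕ → Fin m,
    (∀ s t, s < n → t < n → f s = f t → s = t) ∧
    (∀ e : Edge m, e ∈ C ↔ ∃ t < n, e.val = s(f t, f ((t + 1) % n)))

/-- The set of vertices covered by a set of edges. -/
def vertsOf (m : ℕ) (S : Finset (Edge m)) : Finset (Fin m) :=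
  Finset.univ.filter (fun v => ∃ e ∈ S, v ∈ e.val)

/-- The degree of the multigraph with edge multiplicities `w` at the vertex `v`. -/
def degw (m : ℕ) (w : Edge m → ℕ) (v : Fin m) : ℕ :=
  ∑ e : Edge m, if v ∈ e.val then w e else 0

/-- `w` is `2`-regular and the connected components of the multigraph with edge
multiplicities `w` are a single odd cycle together with a collection of doubled edges. -/
def memOC (m : ℕ) (w : Edge m → ℕ) : Prop :=
  (∀ v : Fin m, degw m w v = 2) ∧
  ∃ (n : ℕ) (C M : Finset (Edge m)), Odd n ∧ IsCycleEdges m n C ∧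
    IsPM m (Finset.univ \ vertsOf m C) M ∧
    ∀ e : Edge m, w e = if e ∈ C then 1 else if e ∈ M then 2 else 0


/-!
For a vertex set `S` of odd size and `i ∈ S`, put `W = S \ {i}`, write `Pf T` for `matchSum m T`
and `P_j = Pf (S \ {j})`.
Expanding Pfaffians along a row shows that `A u v = Pf (W \ {u, v})` is the adjugate of the
alternating matrix `Z = (z_{uv})_{u,v ∈ W}` over `𝔽₂`, i.e. `Z A = Pf W • 1`: the off-diagonal
entries are sums of a symmetric function over ordered pairs, which cancel in characteristic 2.
Moreover `P_j = ∑_c z_{ic} A_{jc}` for `j ∈ W`, and `D_k (Pf W) = q z_k` for the quadratic form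
`q x = ∑_{u<v} A_{uv} x_u x_v`, whose polar form is `xᵀ A y`. Polarising,
`∑_{j ∈ W} P_j² q z_j = q (∑_j P_j z_j) + ∑_{j<k} P_j P_k z_jᵀ A z_k`, and `Z A = Pf W • 1` turns
the right side into `(Pf W)² q z_i + Pf W ∑_{j<k} z_{jk} P_j P_k`. The first term cancels the
summand `j = i` in characteristic 2, and the second is `P_i H₀` because `∑_u z_{iu} P_u = 0`.
-/

open Finset MvPolynomial

section PairSum

variable {ι K : Type*} [LinearOrder ι]

def pairSum [AddCommMonoid K] (T : Finset ι) (f : ι → ι → K) : K :=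
  ∑ p ∈ T ×ˢ T with p.1 < p.2, f p.1 p.2

section AddCommMonoid

variable [AddCommMonoid K]

lemma pairSum_congr {T : Finset ι} {f g : ι → ι → K}
    (h : ∀ u ∈ T, ∀ v ∈ T, u < v → f u v = g u v) : pairSum T f = pairSum T g :=
  sum_congr rfl fun p hp => by
    simp only [mem_filter, mem_product] at hp
    exact h _ hp.1.1 _ hp.1.2 hp.2

lemma pairSum_add (T : Finset ι) (f g : ι → ι → K) :
    pairSum T f + pairSum T g = pairSum T (fun u v => f u v + g u v) :=
  sum_add_distrib.symm

lemma pairSum_eq_sum_sum_ite (T : Finset ι) (f : ι → ι → K) :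
    pairSum T f = ∑ u ∈ T, ∑ v ∈ T, if u < v then f u v else 0 := by
  rw [pairSum, sum_filter, sum_product]

lemma pairSum_univ_ite [Fintype ι] (T : Finset ι) (f : ι → ι → K) :
    pairSum univ (fun u v => if u ∈ T ∧ v ∈ T then f u v else 0) = pairSum T f := by
  rw [pairSum, pairSum, ← sum_filter, filter_filter]
  congr 1
  ext p
  simp only [mem_filter, mem_product, mem_univ, true_and]
  tauto

lemma sum_offDiag_eq_pairSum_add_pairSum_swap (T : Finset ι) (f : ι → ι → K) :
    ∑ p ∈ T.offDiag, f p.1 p.2 = pairSum T f + pairSum T (fun u v => f v u) := by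
  rw [← sum_filter_add_sum_filter_not T.offDiag (fun p => p.1 < p.2)]
  congr 1
  · refine sum_congr ?_ fun _ _ => rfl
    ext p
    simp only [mem_filter, mem_offDiag, mem_product]
    exact ⟨fun h => ⟨⟨h.1.1, h.1.2.1⟩, h.2⟩, fun h => ⟨⟨h.1.1, h.1.2, h.2.ne⟩, h.2⟩⟩
  · refine sum_nbij' Prod.swap Prod.swap (fun p hp => ?_) (fun p hp => ?_) (fun _ _ => rfl)
      (fun _ _ => rfl) fun _ _ => rfl <;>
    simp only [mem_filter, mem_offDiag, mem_product, not_lt, Prod.fst_swap, Prod.snd_swap] at hp ⊢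
    · exact ⟨⟨hp.1.2.1, hp.1.1⟩, lt_of_le_of_ne hp.2 hp.1.2.2.symm⟩
    · exact ⟨⟨hp.1.2, hp.1.1, hp.2.ne'⟩, hp.2.le⟩

lemma sum_sum_eq_sum_add_pairSum (T : Finset ι) (f : ι → ι → K) :
    ∑ u ∈ T, ∑ v ∈ T, f u v = ∑ u ∈ T, f u u + pairSum T (fun u v => f u v + f v u) := by
  rw [← sum_product', ← diag_union_offDiag T, sum_union (disjoint_diag_offDiag T), sum_diag,
    sum_offDiag_eq_pairSum_add_pairSum_swap, pairSum_add]

lemma pairSum_eq_sum_erase_add {T : Finset ι} {a : ι} (ha : a ∈ T) {f : ι → ι → K}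
    (hf : ∀ u v, f u v = f v u) :
    pairSum T f = ∑ u ∈ T.erase a, f a u + pairSum (T.erase a) f := by
  simp only [pairSum_eq_sum_sum_ite, ← add_sum_erase _ _ ha, lt_irrefl, if_false, zero_add,
    ← sum_add_distrib]
  refine sum_congr rfl fun u hu => ?_
  rcases lt_or_gt_of_ne (ne_of_mem_erase hu) with h | h
  · simp [h, h.not_gt, hf]
  · simp [h, h.not_gt]

end AddCommMonoid

lemma mul_pairSum [NonUnitalNonAssocSemiring K] (c : K) (T : Finset ι) (f : ι → ι → K) :
    c * pairSum T f = pairSum T (fun u v => c * f u v) :=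
  mul_sum _ _ _

/-- Polarisation of the quadratic form `x ↦ ∑_{u<v} A u v x_u x_v`. -/
lemma pairSum_mul_sum_mul_sum [CommSemiring K] {κ : Type*} [LinearOrder κ] (W : Finset ι)
    (J : Finset κ) {A : ι → ι → K} (hA : ∀ u v, A u v = A v u) (hA₀ : ∀ u ∈ W, A u u = 0)
    (X : κ → ι → K) :
    pairSum W (fun u v => A u v * (∑ j ∈ J, X j u) * ∑ j ∈ J, X j v) =
      ∑ j ∈ J, pairSum W (fun u v => A u v * X j u * X j v) +
        pairSum J (fun j k => ∑ u ∈ W, ∑ v ∈ W, A u v * X j u * X k v) := by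
  have hpolar : ∀ j k, ∑ u ∈ W, ∑ v ∈ W, A u v * X j u * X k v =
      pairSum W (fun u v => A u v * X j u * X k v) +
        pairSum W (fun u v => A u v * X k u * X j v) := by
    intro j k
    rw [sum_sum_eq_sum_add_pairSum,
      sum_eq_zero fun u hu => by rw [hA₀ u hu, zero_mul, zero_mul], zero_add, pairSum_add]
    exact pairSum_congr fun u _ v _ _ => by rw [hA v u]; ring
  calc pairSum W (fun u v => A u v * (∑ j ∈ J, X j u) * ∑ j ∈ J, X j v)
      = ∑ j ∈ J, ∑ k ∈ J, pairSum W (fun u v => A u v * X j u * X k v) := by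
        simp only [pairSum, mul_sum, sum_mul]
        rw [sum_comm]
        refine (sum_congr rfl fun _ _ => sum_comm).trans sum_comm
    _ = _ := by
        rw [sum_sum_eq_sum_add_pairSum]
        simp only [hpolar]

lemma sum_sum_erase_eq_zero_of_symm [CommRing K] [CharP K 2] (T : Finset ι) {f : ι → ι → K}
    (hf : ∀ u v, f u v = f v u) : ∑ u ∈ T, ∑ v ∈ T.erase u, f u v = 0 := by
  rw [sum_sigma']
  refine sum_involution (fun x _ => ⟨x.2, x.1⟩) (fun x _ => ?_) (fun x hx _ => ?_)
    (fun x hx => ?_) (fun _ _ => rfl)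
  · rw [hf, CharTwo.add_self_eq_zero]
  · simp only [mem_sigma, mem_erase] at hx
    exact fun h => hx.2.1 (congrArg Sigma.fst h)
  · simp only [mem_sigma, mem_erase] at hx ⊢
    exact ⟨hx.2.2, Ne.symm hx.2.1, hx.1⟩

end PairSum

lemma MvPolynomial.pderiv_prod_X {σ R : Type*} [CommSemiring R] [DecidableEq σ] (i : σ)
    (s : Finset σ) :
    pderiv i (∏ j ∈ s, (X j : MvPolynomial σ R)) =
      if i ∈ s then ∏ j ∈ s.erase i, (X j : MvPolynomial σ R) else 0 := by
  induction s using Finset.induction_on with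
  | empty => simp
  | @insert j s hjs ih =>
    rw [prod_insert hjs, pderiv_mul, ih, pderiv_X]
    rcases eq_or_ne i j with rfl | hne
    · simp [hjs]
    · by_cases h : i ∈ s
      · rw [if_pos h, if_pos (mem_insert_of_mem h), erase_insert_of_ne hne.symm,
          prod_insert fun hc => hjs (mem_of_mem_erase hc)]
        simp [hne]
      · simp [hne, h]

section Edges

variable {m : ℕ}

lemma Zv_self (i : Fin m) : Zv m i i = 0 := dif_pos rfl

def mkEdge (u v : Fin m) (h : u ≠ v) : Edge m := ⟨s(u, v), Sym2.mk_isDiag_iff.not.2 h⟩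

lemma Zv_of_ne {u v : Fin m} (h : u ≠ v) : Zv m u v = X (mkEdge u v h) := dif_neg h

lemma mem_mkEdge {u v w : Fin m} (h : u ≠ v) : w ∈ (mkEdge u v h).val ↔ w = u ∨ w = v :=
  Sym2.mem_iff

lemma sum_edge_eq_pairSum {K : Type*} [AddCommMonoid K] (F : Edge m → K) (g : Fin m → Fin m → K)
    (hFg : ∀ u v (h : u ≠ v), F (mkEdge u v h) = g u v) : ∑ e, F e = pairSum univ g := by
  let f : Sym2 (Fin m) → K := fun z => if h : ¬ z.IsDiag then F ⟨z, h⟩ else 0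
  calc ∑ e, F e = ∑ e : Edge m, f e.val := sum_congr rfl fun e _ => by simp only [f, dif_pos e.2]
    _ = ∑ z ∈ univ.sym2 with ¬ z.IsDiag, f z := (sum_subtype _ (by simp) f).symm
    _ = ∑ p ∈ univ.offDiag with p.1 < p.2, f s(p.1, p.2) := sum_sym2_filter_not_isDiag _ _
    _ = pairSum univ g := by
      refine sum_congr ?_ fun p hp => ?_
      · ext p
        simp only [mem_filter, mem_offDiag, mem_product, mem_univ, true_and]
        exact ⟨And.right, fun h => ⟨h.ne, h⟩⟩
      · have hne := (mem_filter.1 hp).2.ne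
        exact (dif_pos (Sym2.mk_isDiag_iff.not.2 hne)).trans (hFg _ _ hne)

lemma sum_edge_mem_eq_sum_erase {K : Type*} [AddCommMonoid K] (a : Fin m) (F : Edge m → K)
    (G : Fin m → K) (hFG : ∀ c (h : a ≠ c), F (mkEdge a c h) = G c) :
    ∑ e with a ∈ e.val, F e = ∑ c ∈ univ.erase a, G c := by
  refine sum_bij' (fun e he => Sym2.Mem.other (mem_filter.1 he).2)
    (fun c hc => mkEdge a c (ne_of_mem_erase hc).symm) (fun e he => ?_) (fun c hc => ?_)
    (fun e he => ?_) (fun c hc => ?_) (fun e he => ?_)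
  · exact mem_erase.2 ⟨Sym2.other_ne e.2 _, mem_univ _⟩
  · exact mem_filter.2 ⟨mem_univ _, (mem_mkEdge _).2 (Or.inl rfl)⟩
  · exact Subtype.ext (Sym2.other_spec _)
  · exact Sym2.congr_right.1 (Sym2.other_spec _)
  · rw [← hFG _ (Sym2.other_ne e.2 _).symm]
    exact congrArg F (Subtype.ext (Sym2.other_spec _)).symm

end Edges

section Matchings

variable {m : ℕ} {T : Finset (Fin m)} {M : Finset (Edge m)}

namespace IsPM

lemma mem_of_mem (hM : IsPM m T M) {e : Edge m} (he : e ∈ M) {x : Fin m} (hx : x ∈ e.val) :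
    x ∈ T :=
  (hM.1 x).2 ⟨e, he, hx⟩

lemma card_eq (hM : IsPM m T M) : T.card = 2 * M.card := by
  have hT : T = M.biUnion fun e => e.val.toFinset := by
    ext x
    simp only [mem_biUnion, Sym2.mem_toFinset]
    exact hM.1 x
  rw [hT, card_biUnion, sum_congr rfl fun e _ => Sym2.card_toFinset_of_not_isDiag _ e.2,
    sum_const, smul_eq_mul, mul_comm]
  intro e he f hf hef
  refine disjoint_left.2 fun x hxe hxf => hef ?_
  exact hM.2 e he f hf x (Sym2.mem_toFinset.1 hxe) (Sym2.mem_toFinset.1 hxf)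

lemma erase_mkEdge (hM : IsPM m T M) {u v : Fin m} (h : u ≠ v) (he : mkEdge u v h ∈ M) :
    IsPM m ((T.erase u).erase v) (M.erase (mkEdge u v h)) := by
  refine ⟨fun x => ⟨fun hx => ?_, fun ⟨f, hf, hxf⟩ => ?_⟩,
    fun e he' f hf' => hM.2 e (mem_of_mem_erase he') f (mem_of_mem_erase hf')⟩
  · obtain ⟨hxv, hxu, hxT⟩ : x ≠ v ∧ x ≠ u ∧ x ∈ T := by simpa using hx
    obtain ⟨f, hf, hxf⟩ := (hM.1 x).1 hxT
    refine ⟨f, mem_erase.2 ⟨?_, hf⟩, hxf⟩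
    rintro rfl
    rcases (mem_mkEdge h).1 hxf with rfl | rfl <;> contradiction
  · obtain ⟨hfe, hf⟩ := mem_erase.1 hf
    have hx_ne : ∀ w ∈ (mkEdge u v h).val, x ≠ w := fun w hw hxw =>
      hfe (hM.2 f hf _ he x hxf (hxw ▸ hw))
    simp only [mem_erase]
    exact ⟨hx_ne v ((mem_mkEdge h).2 (Or.inr rfl)), hx_ne u ((mem_mkEdge h).2 (Or.inl rfl)),
      hM.mem_of_mem hf hxf⟩

lemma insert_mkEdge {u v : Fin m} (hM : IsPM m ((T.erase u).erase v) M) (h : u ≠ v)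
    (hu : u ∈ T) (hv : v ∈ T) : IsPM m T (insert (mkEdge u v h) M) := by
  have hM_ne : ∀ f ∈ M, ∀ x ∈ f.val, x ≠ u ∧ x ≠ v := fun f hf x hx => by
    have := hM.mem_of_mem hf hx
    simp only [mem_erase] at this
    exact ⟨this.2.1, this.1⟩
  refine ⟨fun x => ⟨fun hx => ?_, fun ⟨f, hf, hxf⟩ => ?_⟩, fun e he f hf x hxe hxf => ?_⟩
  · by_cases hx' : x = u ∨ x = v
    · exact ⟨_, mem_insert_self _ _, (mem_mkEdge h).2 hx'⟩
    · rw [not_or] at hx'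
      obtain ⟨f, hf, hxf⟩ := (hM.1 x).1 (by simp [hx', hx])
      exact ⟨f, mem_insert_of_mem hf, hxf⟩
  · rcases mem_insert.1 hf with rfl | hf
    · rcases (mem_mkEdge h).1 hxf with rfl | rfl <;> assumption
    · exact mem_of_mem_erase (mem_of_mem_erase (hM.mem_of_mem hf hxf))
  · rcases mem_insert.1 he with rfl | he <;> rcases mem_insert.1 hf with rfl | hf
    · rfl
    · have := hM_ne f hf x hxf
      rcases (mem_mkEdge h).1 hxe with rfl | rfl <;> simp at this
    · have := hM_ne e he x hxe
      rcases (mem_mkEdge h).1 hxf with rfl | rfl <;> simp at this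
    · exact hM.2 e he f hf x hxe hxf

end IsPM

lemma matchSum_eq_zero_of_odd (hT : Odd T.card) : matchSum m T = 0 := by
  refine sum_eq_zero fun M hM => absurd ?_ (Nat.not_even_iff_odd.2 hT)
  exact ⟨M.card, by rw [(mem_filter.1 hM).2.card_eq, two_mul]⟩

lemma pderiv_matchSum {u v : Fin m} (h : u ≠ v) (T : Finset (Fin m)) :
    pderiv (mkEdge u v h) (matchSum m T) =
      if u ∈ T ∧ v ∈ T then matchSum m ((T.erase u).erase v) else 0 := by
  simp only [matchSum, map_sum, pderiv_prod_X]
  rw [← sum_filter, filter_filter]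
  split_ifs with hT
  · refine sum_bij' (fun M _ => M.erase (mkEdge u v h)) (fun M _ => insert (mkEdge u v h) M)
      (fun M hM => ?_) (fun M hM => ?_) (fun M hM => ?_) (fun M hM => ?_) fun _ _ => rfl
    · obtain ⟨hM, he⟩ := (mem_filter.1 hM).2
      exact mem_filter.2 ⟨mem_univ _, hM.erase_mkEdge h he⟩
    · exact mem_filter.2
        ⟨mem_univ _, (mem_filter.1 hM).2.insert_mkEdge h hT.1 hT.2, mem_insert_self _ _⟩
    · exact insert_erase (mem_filter.1 hM).2.2
    · refine erase_insert fun he => ?_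
      have := (mem_filter.1 hM).2.mem_of_mem he ((mem_mkEdge h).2 (Or.inl rfl))
      simp at this
  · refine sum_eq_zero fun M hM => absurd ?_ hT
    obtain ⟨hM, he⟩ := (mem_filter.1 hM).2
    exact ⟨hM.mem_of_mem he ((mem_mkEdge h).2 (Or.inl rfl)),
      hM.mem_of_mem he ((mem_mkEdge h).2 (Or.inr rfl))⟩

lemma IsPM.sum_X_mul_pderiv_prod (hM : IsPM m T M) {a : Fin m} (ha : a ∈ T) :
    ∑ e with a ∈ e.val, X e * pderiv e (∏ f ∈ M, (X f : R2 m)) = ∏ f ∈ M, (X f : R2 m) := by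
  obtain ⟨e₀, he₀, hae₀⟩ := (hM.1 a).1 ha
  rw [sum_eq_single_of_mem e₀ (mem_filter.2 ⟨mem_univ _, hae₀⟩), pderiv_prod_X, if_pos he₀,
    mul_prod_erase _ _ he₀]
  intro e he hne
  rw [pderiv_prod_X, if_neg fun heM => hne (hM.2 e heM e₀ he₀ a (mem_filter.1 he).2 hae₀),
    mul_zero]

lemma matchSum_eq_sum_erase {a : Fin m} (ha : a ∈ T) :
    matchSum m T = ∑ c ∈ T.erase a, Zv m a c * matchSum m ((T.erase a).erase c) := by
  have hEuler : matchSum m T = ∑ e with a ∈ e.val, X e * pderiv e (matchSum m T) := by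
    simp only [matchSum, map_sum, mul_sum]
    rw [sum_comm]
    exact sum_congr rfl fun M hM => ((mem_filter.1 hM).2.sum_X_mul_pderiv_prod ha).symm
  rw [hEuler, sum_edge_mem_eq_sum_erase a _
      (fun c => Zv m a c * if a ∈ T ∧ c ∈ T then matchSum m ((T.erase a).erase c) else 0)
      fun c h => by rw [pderiv_matchSum, Zv_of_ne h]]
  refine (sum_subset (erase_subset_erase _ (subset_univ T)) fun c hc' hc => ?_).symm.trans
    (sum_congr rfl fun c hc => ?_)
  · rw [if_neg fun h => hc (mem_erase.2 ⟨ne_of_mem_erase hc', h.2⟩), mul_zero]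
  · rw [if_pos ⟨ha, mem_of_mem_erase hc⟩]

lemma sum_Zv_mul_matchSum_erase {S : Finset (Fin m)} {a : Fin m} (ha : a ∈ S) :
    ∑ u ∈ S, Zv m a u * matchSum m (S.erase u) = 0 := by
  rw [← add_sum_erase _ _ ha, Zv_self, zero_mul, zero_add]
  calc ∑ u ∈ S.erase a, Zv m a u * matchSum m (S.erase u)
      = ∑ u ∈ S.erase a, ∑ c ∈ (S.erase a).erase u,
          Zv m a u * Zv m a c * matchSum m (((S.erase a).erase u).erase c) := by
        refine sum_congr rfl fun u hu => ?_
        rw [matchSum_eq_sum_erase (mem_erase.2 ⟨(ne_of_mem_erase hu).symm, ha⟩), mul_sum,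
          erase_right_comm]
        simp only [mul_assoc]
    _ = 0 := sum_sum_erase_eq_zero_of_symm _ fun u c => by
        rw [erase_right_comm (a := u)]
        ring

end Matchings

section Adjugate

variable {m : ℕ} {W : Finset (Fin m)}

/-- Over `𝔽₂` there are no signs, so this is the adjugate of `(z_{uv})_{u,v ∈ W}`
(`sum_Zv_mul_pfAdj`). -/
def pfAdj (W : Finset (Fin m)) (u v : Fin m) : R2 m := matchSum m ((W.erase u).erase v)

lemma pfAdj_comm (W : Finset (Fin m)) (u v : Fin m) : pfAdj W u v = pfAdj W v u := by
  rw [pfAdj, pfAdj, erase_right_comm]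

lemma pfAdj_self (hW : Even W.card) {u : Fin m} (hu : u ∈ W) : pfAdj W u u = 0 := by
  rw [pfAdj, erase_idem]
  refine matchSum_eq_zero_of_odd ?_
  rw [card_erase_of_mem hu]
  exact Nat.Even.sub_odd (card_pos.2 ⟨u, hu⟩) hW odd_one

lemma sum_Zv_mul_pfAdj (hW : Even W.card) {a v : Fin m} (ha : a ∈ W) (hv : v ∈ W) :
    ∑ u ∈ W, Zv m v u * pfAdj W a u = if v = a then matchSum m W else 0 := by
  rw [← add_sum_erase _ _ ha, pfAdj_self hW ha, mul_zero, zero_add]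
  split_ifs with hva
  · rw [hva]
    exact (matchSum_eq_sum_erase ha).symm
  · exact sum_Zv_mul_matchSum_erase (mem_erase.2 ⟨hva, hv⟩)

lemma sum_sum_pfAdj_mul_Zv_mul_Zv (hW : Even W.card) {j : Fin m} (hj : j ∈ W) (k : Fin m) :
    ∑ u ∈ W, ∑ v ∈ W, pfAdj W u v * Zv m j u * Zv m k v = matchSum m W * Zv m j k :=
  calc ∑ u ∈ W, ∑ v ∈ W, pfAdj W u v * Zv m j u * Zv m k v
      = ∑ v ∈ W, Zv m k v * ∑ u ∈ W, Zv m j u * pfAdj W v u := by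
        rw [sum_comm]
        refine sum_congr rfl fun v _ => ?_
        rw [mul_sum]
        exact sum_congr rfl fun u _ => by rw [pfAdj_comm]; ring
    _ = ∑ v ∈ W, Zv m k v * if j = v then matchSum m W else 0 :=
        sum_congr rfl fun v hv => by rw [sum_Zv_mul_pfAdj hW hv hj]
    _ = matchSum m W * Zv m j k := by simp [hj, mul_comm, Zv_symm m k]

lemma D_matchSum (k : Fin m) (W : Finset (Fin m)) :
    D m k (matchSum m W) = pairSum W (fun u v => pfAdj W u v * Zv m k u * Zv m k v) := by
  rw [D, sum_filter, sum_edge_eq_pairSum _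
    (fun u v => if u ∈ W ∧ v ∈ W then pfAdj W u v * Zv m k u * Zv m k v else 0),
    pairSum_univ_ite]
  intro u v h
  by_cases hk : k ∈ (mkEdge u v h).val
  · rw [if_neg (not_not.2 hk)]
    rcases (mem_mkEdge h).1 hk with rfl | rfl <;> simp [Zv_self]
  · rw [if_pos hk, pderiv_matchSum, mul_ite, mul_zero]
    refine if_congr Iff.rfl ?_ rfl
    change Zv m u k * Zv m k v * pfAdj W u v = _
    rw [Zv_symm m u k]
    ring

end Adjugate

def H0On {m : ℕ} (S : Finset (Fin m)) : R2 m :=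
  pairSum S (fun u v => Zv m u v * matchSum m (S.erase u) * matchSum m (S.erase v))

section Main

variable {m : ℕ} {S : Finset (Fin m)} {i : Fin m}

lemma H0On_eq_pairSum_erase (hi : i ∈ S) :
    H0On S = pairSum (S.erase i)
      (fun u v => Zv m u v * matchSum m (S.erase u) * matchSum m (S.erase v)) := by
  have hker : ∑ u ∈ S.erase i, Zv m i u * matchSum m (S.erase u) = 0 := by
    have := sum_Zv_mul_matchSum_erase hi
    rwa [← add_sum_erase _ _ hi, Zv_self, zero_mul, zero_add] at this
  rw [H0On, pairSum_eq_sum_erase_add hi fun u v => by rw [Zv_symm m u v]; ring]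
  simp only [mul_right_comm _ (matchSum m (S.erase i)), ← sum_mul, hker, zero_mul, zero_add]

lemma even_card_erase (hS : Odd S.card) (hi : i ∈ S) : Even (S.erase i).card := by
  rw [card_erase_of_mem hi]
  exact Nat.Odd.sub_odd hS odd_one

lemma matchSum_erase_eq_sum_pfAdj (hS : Odd S.card) (hi : i ∈ S) {j : Fin m}
    (hj : j ∈ S.erase i) :
    matchSum m (S.erase j) = ∑ c ∈ S.erase i, Zv m i c * pfAdj (S.erase i) j c := by
  have hij : i ∈ S.erase j := mem_erase.2 ⟨(ne_of_mem_erase hj).symm, hi⟩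
  rw [← sum_erase _ (by rw [pfAdj_self (even_card_erase hS hi) hj, mul_zero]),
    matchSum_eq_sum_erase hij, erase_right_comm (s := S) (a := j)]
  rfl

lemma sum_matchSum_erase_mul_Zv (hS : Odd S.card) (hi : i ∈ S) {u : Fin m}
    (hu : u ∈ S.erase i) :
    ∑ j ∈ S.erase i, matchSum m (S.erase j) * Zv m j u = matchSum m (S.erase i) * Zv m i u :=
  calc ∑ j ∈ S.erase i, matchSum m (S.erase j) * Zv m j u
      = ∑ c ∈ S.erase i, Zv m i c * ∑ j ∈ S.erase i, Zv m u j * pfAdj (S.erase i) c j := by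
        rw [sum_congr rfl fun j hj => by rw [matchSum_erase_eq_sum_pfAdj hS hi hj, sum_mul],
          sum_comm]
        refine sum_congr rfl fun c _ => ?_
        rw [mul_sum]
        exact sum_congr rfl fun j _ => by rw [pfAdj_comm, Zv_symm m j]; ring
    _ = ∑ c ∈ S.erase i, Zv m i c * if u = c then matchSum m (S.erase i) else 0 :=
        sum_congr rfl fun c hc => by rw [sum_Zv_mul_pfAdj (even_card_erase hS hi) hc hu]
    _ = matchSum m (S.erase i) * Zv m i u := by simp [hu, mul_comm]

theorem sum_D_matchSum_erase_mul_sq (hS : Odd S.card) (hi : i ∈ S) :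
    ∑ j ∈ S, D m j (matchSum m (S.erase i)) * matchSum m (S.erase j) ^ 2 =
      matchSum m (S.erase i) * H0On S := by
  set W := S.erase i
  set p := matchSum m W
  set Pf : Fin m → R2 m := fun j => matchSum m (S.erase j)
  have hW := even_card_erase hS hi
  have hsquare : pairSum W (fun u v => pfAdj W u v * (∑ j ∈ W, Pf j * Zv m j u) *
      ∑ j ∈ W, Pf j * Zv m j v) =
        p ^ 2 * pairSum W (fun u v => pfAdj W u v * Zv m i u * Zv m i v) := by
    rw [mul_pairSum]
    refine pairSum_congr fun u hu v hv _ => ?_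
    rw [sum_matchSum_erase_mul_Zv hS hi hu, sum_matchSum_erase_mul_Zv hS hi hv]
    ring
  have hcross : pairSum W (fun j k => ∑ u ∈ W, ∑ v ∈ W, pfAdj W u v * (Pf j * Zv m j u) *
      (Pf k * Zv m k v)) = p * pairSum W (fun j k => Zv m j k * Pf j * Pf k) := by
    rw [mul_pairSum]
    refine pairSum_congr fun j hj k _ _ => ?_
    rw [show p * (Zv m j k * Pf j * Pf k) = Pf j * Pf k * (p * Zv m j k) by ring,
      ← sum_sum_pfAdj_mul_Zv_mul_Zv hW hj k, mul_sum]
    exact sum_congr rfl fun u _ => by rw [mul_sum]; exact sum_congr rfl fun v _ => by ring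
  have hexpand := pairSum_mul_sum_mul_sum W W (pfAdj_comm W) (fun u hu => pfAdj_self hW hu)
    fun j u => Pf j * Zv m j u
  calc ∑ j ∈ S, D m j p * Pf j ^ 2
      = p ^ 2 * pairSum W (fun u v => pfAdj W u v * Zv m i u * Zv m i v) +
          ∑ j ∈ W, pairSum W (fun u v => pfAdj W u v * (Pf j * Zv m j u) * (Pf j * Zv m j v)) := by
        rw [← add_sum_erase _ _ hi, D_matchSum, mul_comm]
        refine congrArg _ (sum_congr rfl fun j _ => ?_)
        rw [D_matchSum, mul_comm, mul_pairSum]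
        exact pairSum_congr fun u _ v _ _ => by ring
    _ = p ^ 2 * pairSum W (fun u v => pfAdj W u v * Zv m i u * Zv m i v) +
          (p ^ 2 * pairSum W (fun u v => pfAdj W u v * Zv m i u * Zv m i v) +
            p * pairSum W (fun j k => Zv m j k * Pf j * Pf k)) := by
        rw [CharTwo.add_eq_iff_eq_add.1 hexpand.symm, hsquare, hcross]
    _ = p * H0On S := by
        rw [← add_assoc, CharTwo.add_self_eq_zero, zero_add, H0On_eq_pairSum_erase hi]

end Main

theorem left_square_general (m : ℕ) (hmodd : Odd m) (i : Fin m) :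
    ∑ j : Fin m, D m j (P m i) * P m j ^ 2 = P m i * H0 m := by
  have hH0 : H0 m = H0On univ := by
    rw [H0, H0On, pairSum, univ_product_univ]
    rfl
  rw [hH0]
  exact sum_D_matchSum_erase_mul_sq (by rwa [card_univ, Fintype.card_fin]) (mem_univ i)

/-- For every `i`, `Σ_{j=1}^m D_j(P_i)·P_j² = P_i·H₀`. -/
theorem left_square (m : ℕ) (hm : 3 ≤ m) (hmodd : Odd m) (i : Fin m) :
    ∑ j : Fin m, D m j (P m i) * P m j ^ 2 = P m i * H0 m :=
  left_square_general m hmodd i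

end
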